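/- arXiv:2210.13627 — 4 statements merged into one kernel-verified Lean document; each statement's English description precedes it below -/
import Mathlib

section
/- Let s>0, λ>0 and N≥1. Let μ_N be the product probability measure on (0,∞)^N whose i-th marginal is the Gamma distribution with density (λ^{2s}/Γ(2s)) y^{2s-1} e^{-λ y}, and let 𝓛 be the generator of the integrable heat conduction model with equal boundary parameters λ_L = λ_R = λ. Then μ_N is stationary at the generator level: for every polynomial function f: ℝ^N → ℝ, ∫_{(0,∞)^N} (𝓛f)(y) μ_N(dy) = 0. -/
open MeasureTheory Real

noncomputable section

namespace HeatModel

variable {N : ℕ}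

/-- Value of the energy configuration at (0-indexed) site `i`; junk value 0 if out of range. -/
def get (y : Fin N → ℝ) (i : ℕ) : ℝ := if h : i < N then y ⟨i, h⟩ else 0

/-- Update the energy configuration at site `i` to value `v`. -/
def upd (y : Fin N → ℝ) (i : ℕ) (v : ℝ) : Fin N → ℝ := fun j => if (j : ℕ) = i then v else y j

/-- Move an amount `a` of energy from site `i` to site `j`. -/
def move (y : Fin N → ℝ) (i j : ℕ) (a : ℝ) : Fin N → ℝ :=
  upd (upd y i (get y i - a)) j (get y j + a)

/-- Bulk Levy generator on the bond `(i, i+1)` (0-indexed sites). -/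
def bulkGen (s : ℝ) (i : ℕ) (f : (Fin N → ℝ) → ℝ) (y : Fin N → ℝ) : ℝ :=
  (∫ a in Set.Ioo 0 (get y i),
      (1 - a / get y i) ^ (2 * s - 1) / a * (f (move y i (i + 1) a) - f y))
  + ∫ a in Set.Ioo 0 (get y (i + 1)),
      (1 - a / get y (i + 1)) ^ (2 * s - 1) / a * (f (move y (i + 1) i a) - f y)

/-- Left reservoir generator (acting at site `0`), with parameter `lamL`. -/
def leftGen (s lamL : ℝ) (f : (Fin N → ℝ) → ℝ) (y : Fin N → ℝ) : ℝ :=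
  (∫ a in Set.Ioo 0 (get y 0),
      (1 - a / get y 0) ^ (2 * s - 1) / a * (f (upd y 0 (get y 0 - a)) - f y))
  + ∫ a in Set.Ioi (0 : ℝ),
      Real.exp (-(lamL * a)) / a * (f (upd y 0 (get y 0 + a)) - f y)

/-- Right reservoir generator (acting at site `N-1`), with parameter `lamR`. -/
def rightGen (s lamR : ℝ) (f : (Fin N → ℝ) → ℝ) (y : Fin N → ℝ) : ℝ :=
  (∫ a in Set.Ioo 0 (get y (N - 1)),
      (1 - a / get y (N - 1)) ^ (2 * s - 1) / a *
        (f (upd y (N - 1) (get y (N - 1) - a)) - f y))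
  + ∫ a in Set.Ioi (0 : ℝ),
      Real.exp (-(lamR * a)) / a * (f (upd y (N - 1) (get y (N - 1) + a)) - f y)

/-- The full generator of the integrable heat conduction model. -/
def gen (s lamL lamR : ℝ) (f : (Fin N → ℝ) → ℝ) (y : Fin N → ℝ) : ℝ :=
  leftGen s lamL f y + (∑ i ∈ Finset.range (N - 1), bulkGen s i f y) + rightGen s lamR f y

/-- Density of the product of `N` Gamma(2s, lam) distributions. -/
def gammaWeight (s lam : ℝ) (y : Fin N → ℝ) : ℝ :=
  ∏ i : Fin N, lam ^ (2 * s) / Real.Gamma (2 * s) * (y i) ^ (2 * s - 1) * Real.exp (-(lam * y i))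

/-!
Write `ρ` for the Gamma product density and
`I(w) = ∫∫_{y > 0, a > 0} ρ(y) e^{-λa} a⁻¹ (f(y + a w) - f(y)) da dy`.
Substituting `y ↦ y + a eᵢ` in a term of `𝓛` that removes energy `a` from site `i` and moves
the configuration by `a v`, the identity `ρ(y + a eᵢ) (1 - a / (yᵢ + a))^{2s-1} = ρ(y) e^{-λa}`
turns it into `I(eᵢ + v) - I(eᵢ)`, while the reservoir term adding energy at site `i` is `I(eᵢ)`.
So a reservoir contributes `(I(0) - I(eᵢ)) + I(eᵢ) = 0` and a bond
`(I(eⱼ) - I(eᵢ)) + (I(eᵢ) - I(eⱼ)) = 0`. For polynomial `f` all these integrals converge: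
`|f(y + a w) - f(y)| ≤ C |a| e^{ε(‖y‖ + |a|)}` for every `ε > 0`, which tames the `a⁻¹`
singularity and is beaten by the Gamma tails.
-/

end HeatModel

section ExpGrowth

variable {E : Type*} [SeminormedAddCommGroup E]

def ExpBounded (f : E → ℝ) : Prop :=
  ∀ ε > 0, ∃ C ≥ 0, ∀ x, |f x| ≤ C * exp (ε * ‖x‖)

lemma exp_half_mul_exp_half (ε t : ℝ) : exp (ε / 2 * t) * exp (ε / 2 * t) = exp (ε * t) := by
  rw [← exp_add]; ring_nf

lemma expBounded_const (c : ℝ) : ExpBounded fun _ : E => c :=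
  fun _ _ => ⟨|c|, abs_nonneg c, fun _ =>
    le_mul_of_one_le_right (abs_nonneg c) (one_le_exp (by positivity))⟩

lemma ExpBounded.add {f g : E → ℝ} (hf : ExpBounded f) (hg : ExpBounded g) :
    ExpBounded fun x => f x + g x := by
  intro ε hε
  obtain ⟨C₁, hC₁, h₁⟩ := hf ε hε
  obtain ⟨C₂, hC₂, h₂⟩ := hg ε hε
  exact ⟨C₁ + C₂, by positivity, fun x => (abs_add_le _ _).trans (by linarith [h₁ x, h₂ x])⟩

lemma ExpBounded.mul {f g : E → ℝ} (hf : ExpBounded f) (hg : ExpBounded g) :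
    ExpBounded fun x => f x * g x := by
  intro ε hε
  obtain ⟨C₁, hC₁, h₁⟩ := hf (ε / 2) (half_pos hε)
  obtain ⟨C₂, hC₂, h₂⟩ := hg (ε / 2) (half_pos hε)
  refine ⟨C₁ * C₂, by positivity, fun x => ?_⟩
  calc |f x * g x| = |f x| * |g x| := abs_mul _ _
    _ ≤ C₁ * exp (ε / 2 * ‖x‖) * (C₂ * exp (ε / 2 * ‖x‖)) :=
        mul_le_mul (h₁ x) (h₂ x) (abs_nonneg _) (by positivity)
    _ = C₁ * C₂ * exp (ε * ‖x‖) := by rw [mul_mul_mul_comm, exp_half_mul_exp_half]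

variable [NormedSpace ℝ E]

def ExpLipschitzAlong (w : E) (f : E → ℝ) : Prop :=
  ∀ ε > 0, ∃ C ≥ 0, ∀ x (a : ℝ), |f (x + a • w) - f x| ≤ C * |a| * exp (ε * (‖x‖ + |a|))

lemma ContinuousLinearMap.expBounded (L : E →L[ℝ] ℝ) : ExpBounded L := by
  intro ε hε
  refine ⟨‖L‖ / ε, by positivity, fun x => ?_⟩
  have hx : ε * ‖x‖ ≤ exp (ε * ‖x‖) := by linarith [add_one_le_exp (ε * ‖x‖)]
  calc |L x| ≤ ‖L‖ * ‖x‖ := L.le_opNorm x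
    _ = ‖L‖ / ε * (ε * ‖x‖) := by field_simp
    _ ≤ ‖L‖ / ε * exp (ε * ‖x‖) := by gcongr

lemma ExpBounded.comp_add_smul {f : E → ℝ} (hf : ExpBounded f) (w : E) {ε : ℝ} (hε : 0 < ε) :
    ∃ C ≥ 0, ∀ x (a : ℝ), |f (x + a • w)| ≤ C * exp (ε * (‖x‖ + |a|)) := by
  obtain ⟨C, hC₀, hC⟩ := hf (ε / (1 + ‖w‖)) (by positivity)
  refine ⟨C, hC₀, fun x a => (hC _).trans (mul_le_mul_of_nonneg_left (exp_le_exp.2 ?_) hC₀)⟩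
  have hxa : ‖x + a • w‖ ≤ (1 + ‖w‖) * (‖x‖ + |a|) := by
    calc ‖x + a • w‖ ≤ ‖x‖ + |a| * ‖w‖ := by
          simpa [norm_smul] using norm_add_le x (a • w)
      _ ≤ (1 + ‖w‖) * (‖x‖ + |a|) := by nlinarith [norm_nonneg x, norm_nonneg w, abs_nonneg a]
  calc ε / (1 + ‖w‖) * ‖x + a • w‖ ≤ ε / (1 + ‖w‖) * ((1 + ‖w‖) * (‖x‖ + |a|)) := by gcongr
    _ = ε * (‖x‖ + |a|) := by field_simp

lemma expLipschitzAlong_const (w : E) (c : ℝ) : ExpLipschitzAlong w fun _ : E => c :=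
  fun _ _ => ⟨0, le_rfl, fun x a => by simp⟩

lemma ContinuousLinearMap.expLipschitzAlong (L : E →L[ℝ] ℝ) (w : E) : ExpLipschitzAlong w L := by
  intro ε hε
  refine ⟨|L w|, abs_nonneg _, fun x a => ?_⟩
  rw [map_add, map_smul, smul_eq_mul, add_sub_cancel_left, abs_mul, mul_comm |a|]
  exact le_mul_of_one_le_right (by positivity) (one_le_exp (by positivity))

lemma ExpLipschitzAlong.add {w : E} {f g : E → ℝ} (hf : ExpLipschitzAlong w f)
    (hg : ExpLipschitzAlong w g) : ExpLipschitzAlong w fun x => f x + g x := by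
  intro ε hε
  obtain ⟨C₁, hC₁, h₁⟩ := hf ε hε
  obtain ⟨C₂, hC₂, h₂⟩ := hg ε hε
  refine ⟨C₁ + C₂, by positivity, fun x a => ?_⟩
  calc |f (x + a • w) + g (x + a • w) - (f x + g x)|
      ≤ |f (x + a • w) - f x| + |g (x + a • w) - g x| := by
        rw [add_sub_add_comm]; exact abs_add_le _ _
    _ ≤ (C₁ + C₂) * |a| * exp (ε * (‖x‖ + |a|)) := by linarith [h₁ x a, h₂ x a]

/-- Leibniz rule for increments: `Δ(fg) = f(x + a • w) Δg + (Δf) g(x)`. -/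
lemma ExpLipschitzAlong.mul {w : E} {f g : E → ℝ} (hf : ExpBounded f) (hg : ExpBounded g)
    (hf' : ExpLipschitzAlong w f) (hg' : ExpLipschitzAlong w g) :
    ExpLipschitzAlong w fun x => f x * g x := by
  intro ε hε
  obtain ⟨C₁, hC₁, h₁⟩ := hf.comp_add_smul w (half_pos hε)
  obtain ⟨C₂, hC₂, h₂⟩ := hg' (ε / 2) (half_pos hε)
  obtain ⟨C₃, hC₃, h₃⟩ := hf' (ε / 2) (half_pos hε)
  obtain ⟨C₄, hC₄, h₄⟩ := hg.comp_add_smul 0 (half_pos hε)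
  refine ⟨C₁ * C₂ + C₃ * C₄, by positivity, fun x a => ?_⟩
  have hg₀ : |g x| ≤ C₄ * exp (ε / 2 * (‖x‖ + |a|)) := by simpa using h₄ x a
  calc |f (x + a • w) * g (x + a • w) - f x * g x|
      = |f (x + a • w) * (g (x + a • w) - g x) + (f (x + a • w) - f x) * g x| := by ring_nf
    _ ≤ |f (x + a • w)| * |g (x + a • w) - g x| + |f (x + a • w) - f x| * |g x| := by
        rw [← abs_mul, ← abs_mul]; exact abs_add_le _ _
    _ ≤ C₁ * exp (ε / 2 * (‖x‖ + |a|)) * (C₂ * |a| * exp (ε / 2 * (‖x‖ + |a|)))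
        + C₃ * |a| * exp (ε / 2 * (‖x‖ + |a|)) * (C₄ * exp (ε / 2 * (‖x‖ + |a|))) := by
        gcongr ?_ + ?_
        · exact mul_le_mul (h₁ x a) (h₂ x a) (abs_nonneg _) (by positivity)
        · exact mul_le_mul (h₃ x a) hg₀ (abs_nonneg _) (by positivity)
    _ = (C₁ * C₂ + C₃ * C₄) * |a| * exp (ε * (‖x‖ + |a|)) := by
        rw [← exp_half_mul_exp_half ε]; ring

end ExpGrowth

namespace MvPolynomial

variable {σ : Type*} [Fintype σ]

lemma expBounded_eval_and_expLipschitzAlong (p : MvPolynomial σ ℝ) :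
    ExpBounded (fun x => eval x p) ∧ ∀ w, ExpLipschitzAlong w fun x => eval x p := by
  induction p using MvPolynomial.induction_on with
  | C c => simpa using ⟨expBounded_const c, fun w => expLipschitzAlong_const w c⟩
  | add p q hp hq =>
    simpa using ⟨hp.1.add hq.1, fun w => (hp.2 w).add (hq.2 w)⟩
  | mul_X p n hp =>
    have hXb : ExpBounded fun x : σ → ℝ => x n :=
      (ContinuousLinearMap.proj (R := ℝ) (φ := fun _ : σ => ℝ) n).expBounded
    have hXl : ∀ w, ExpLipschitzAlong w fun x : σ → ℝ => x n :=
      (ContinuousLinearMap.proj (R := ℝ) (φ := fun _ : σ => ℝ) n).expLipschitzAlong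
    simpa using ⟨hp.1.mul hXb, fun w => (hp.2 w).mul hp.1 hXb (hXl w)⟩

end MvPolynomial

section Shear

variable {E : Type*} [NormedAddCommGroup E] [NormedSpace ℝ E] [MeasurableSpace E] [BorelSpace E]
  [SecondCountableTopology E]

def MeasurableEquiv.shear (w : E) : E × ℝ ≃ᵐ E × ℝ where
  toFun z := (z.1 + z.2 • w, z.2)
  invFun z := (z.1 - z.2 • w, z.2)
  left_inv z := by simp
  right_inv z := by simp
  measurable_toFun := by
    change Measurable fun z : E × ℝ => (z.1 + z.2 • w, z.2); fun_prop
  measurable_invFun := by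
    change Measurable fun z : E × ℝ => (z.1 - z.2 • w, z.2); fun_prop

lemma measurePreserving_shear (μ : Measure E) [SFinite μ] [μ.IsAddRightInvariant] (w : E) :
    MeasurePreserving (MeasurableEquiv.shear w) (μ.prod volume) (μ.prod volume) := by
  have hskew : MeasurePreserving (fun q : ℝ × E => (q.1, q.2 + q.1 • w))
      (volume.prod μ) (volume.prod μ) :=
    (MeasurePreserving.id _).skew_product (by fun_prop)
      (.of_forall fun a => map_add_right_eq_self μ (a • w))
  exact (Measure.measurePreserving_swap.comp hskew).comp Measure.measurePreserving_swap

end Shear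

section SliceIntegral

variable {α β : Type*} [MeasurableSpace β] {ν : Measure β} {S : Set α} {T : α → Set β}
  {g : α × β → ℝ}

lemma integral_indicator_slice (hT : ∀ x, MeasurableSet (T x)) (x : α) :
    ∫ b, {z : α × β | z.1 ∈ S ∧ z.2 ∈ T z.1}.indicator g (x, b) ∂ν
      = S.indicator (fun x => ∫ b in T x, g (x, b) ∂ν) x := by
  by_cases hx : x ∈ S
  · rw [Set.indicator_of_mem hx, ← integral_indicator (hT x)]
    congr 1 with b
    by_cases hb : b ∈ T x
    · rw [Set.indicator_of_mem (show (x, b) ∈ {z : α × β | z.1 ∈ S ∧ z.2 ∈ T z.1} from ⟨hx, hb⟩),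
        Set.indicator_of_mem hb]
    · rw [Set.indicator_of_notMem (s := {z : α × β | z.1 ∈ S ∧ z.2 ∈ T z.1}) fun h => hb h.2,
        Set.indicator_of_notMem hb]
  · simp [hx]

variable [MeasurableSpace α] {μ : Measure α} [SFinite ν]

lemma integrableOn_setIntegral_of_integrable_indicator (hS : MeasurableSet S)
    (hT : ∀ x, MeasurableSet (T x))
    (hg : Integrable ({z : α × β | z.1 ∈ S ∧ z.2 ∈ T z.1}.indicator g) (μ.prod ν)) :
    IntegrableOn (fun x => ∫ b in T x, g (x, b) ∂ν) S μ := by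
  rw [← integrable_indicator_iff hS]
  simpa only [integral_indicator_slice hT] using hg.integral_prod_left

lemma setIntegral_setIntegral_eq_integral_indicator [SFinite μ] (hS : MeasurableSet S)
    (hT : ∀ x, MeasurableSet (T x))
    (hg : Integrable ({z : α × β | z.1 ∈ S ∧ z.2 ∈ T z.1}.indicator g) (μ.prod ν)) :
    ∫ x in S, ∫ b in T x, g (x, b) ∂ν ∂μ
      = ∫ z, {z : α × β | z.1 ∈ S ∧ z.2 ∈ T z.1}.indicator g z ∂(μ.prod ν) := by
  rw [integral_prod _ hg, ← integral_indicator hS]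
  simp only [integral_indicator_slice hT]

end SliceIntegral

lemma integrableOn_univ_pi_prod {ι α : Type*} [Fintype ι] [MeasurableSpace α] {μ : Measure α}
    [SigmaFinite μ] {φ : ι → α → ℝ} {s : Set α} (hφ : ∀ i, IntegrableOn (φ i) s μ) :
    IntegrableOn (fun y : ι → α => ∏ i, φ i (y i)) (Set.univ.pi fun _ => s)
      (Measure.pi fun _ => μ) := by
  rw [IntegrableOn, Measure.restrict_pi_pi]
  exact Integrable.fintype_prod hφ

lemma Function.update_add_eq_add_smul_single {ι : Type*} [DecidableEq ι] (y : ι → ℝ) (i : ι)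
    (a : ℝ) : Function.update y i (y i + a) = y + a • Pi.single i 1 := by
  funext j
  by_cases hj : j = i
  · subst hj; simp
  · simp [hj]

lemma Function.update_sub_eq_add_smul_neg_single {ι : Type*} [DecidableEq ι] (y : ι → ℝ) (i : ι)
    (a : ℝ) : Function.update y i (y i - a) = y + a • -Pi.single i 1 := by
  rw [sub_eq_add_neg, Function.update_add_eq_add_smul_single, smul_neg, neg_smul]

namespace HeatModel

variable {N : ℕ}

def posOrthant (N : ℕ) : Set (Fin N → ℝ) := Set.univ.pi fun _ => Set.Ioi 0

lemma mem_posOrthant {y : Fin N → ℝ} : y ∈ posOrthant N ↔ ∀ k, 0 < y k := by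
  simp [posOrthant]

lemma measurableSet_posOrthant : MeasurableSet (posOrthant N) :=
  MeasurableSet.univ_pi fun _ => measurableSet_Ioi

lemma norm_le_sum_of_mem_posOrthant {y : Fin N → ℝ} (hy : y ∈ posOrthant N) :
    ‖y‖ ≤ ∑ k, y k := by
  have hpos := mem_posOrthant.1 hy
  refine (pi_norm_le_iff_of_nonneg (Finset.sum_nonneg fun k _ => (hpos k).le)).2 fun k => ?_
  rw [Real.norm_of_nonneg (hpos k).le]
  exact Finset.single_le_sum (fun j _ => (hpos j).le) (Finset.mem_univ k)

lemma get_of_lt {i : ℕ} (h : i < N) (y : Fin N → ℝ) : get y i = y ⟨i, h⟩ := dif_pos h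

lemma upd_of_lt {i : ℕ} (h : i < N) (y : Fin N → ℝ) (v : ℝ) :
    upd y i v = Function.update y ⟨i, h⟩ v := by
  funext j
  simp [upd, Function.update_apply, Fin.ext_iff]

lemma move_of_lt {i j : ℕ} (hi : i < N) (hj : j < N) (hij : i ≠ j) (y : Fin N → ℝ) (a : ℝ) :
    move y i j a = y + a • (Pi.single ⟨j, hj⟩ 1 - Pi.single ⟨i, hi⟩ 1) := by
  have hji : (⟨j, hj⟩ : Fin N) ≠ ⟨i, hi⟩ := fun h => hij (congrArg Fin.val h).symm
  have hyj : y ⟨j, hj⟩ = (y + a • -Pi.single (⟨i, hi⟩ : Fin N) (1 : ℝ) : Fin N → ℝ) ⟨j, hj⟩ := by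
    simp [hji]
  rw [move, upd_of_lt hi, upd_of_lt hj, get_of_lt hi, get_of_lt hj,
    Function.update_sub_eq_add_smul_neg_single, hyj, Function.update_add_eq_add_smul_single]
  module

def gammaDensity (s lam t : ℝ) : ℝ :=
  lam ^ (2 * s) / Gamma (2 * s) * t ^ (2 * s - 1) * exp (-(lam * t))

lemma gammaWeight_eq_prod (s lam : ℝ) (y : Fin N → ℝ) :
    gammaWeight s lam y = ∏ k, gammaDensity s lam (y k) := rfl

lemma gammaDensity_add_mul (s lam : ℝ) {t a : ℝ} (ht : 0 < t) (ha : 0 ≤ a) :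
    gammaDensity s lam (t + a) * (1 - a / (t + a)) ^ (2 * s - 1)
      = gammaDensity s lam t * exp (-(lam * a)) := by
  have hta : 0 < t + a := by linarith
  have hkernel : 1 - a / (t + a) = t / (t + a) := by field_simp; ring
  have hpow : (t + a) ^ (2 * s - 1) * (t / (t + a)) ^ (2 * s - 1) = t ^ (2 * s - 1) := by
    rw [← mul_rpow hta.le (div_nonneg ht.le hta.le), mul_div_cancel₀ t hta.ne']
  have hexp : exp (-(lam * (t + a))) = exp (-(lam * t)) * exp (-(lam * a)) := by
    rw [← exp_add]; ring_nf
  rw [gammaDensity, gammaDensity, hkernel, hexp, ← hpow]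
  ring

lemma gammaWeight_add_single_mul (s lam : ℝ) {y : Fin N → ℝ} {i : Fin N} (hy : 0 < y i)
    {a : ℝ} (ha : 0 ≤ a) :
    gammaWeight s lam (y + a • Pi.single i 1) * (1 - a / (y i + a)) ^ (2 * s - 1)
      = gammaWeight s lam y * exp (-(lam * a)) := by
  rw [← Function.update_add_eq_add_smul_single, gammaWeight_eq_prod, gammaWeight_eq_prod,
    Finset.prod_eq_mul_prod_sdiff_singleton_of_mem (Finset.mem_univ i),
    Finset.prod_eq_mul_prod_sdiff_singleton_of_mem (Finset.mem_univ i)]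
  have hrest : ∏ k ∈ Finset.univ \ {i}, gammaDensity s lam (Function.update y i (y i + a) k)
      = ∏ k ∈ Finset.univ \ {i}, gammaDensity s lam (y k) :=
    Finset.prod_congr rfl fun k hk => by
      rw [Function.update_of_ne (by simpa using hk)]
  rw [hrest, Function.update_self, mul_right_comm, gammaDensity_add_mul s lam hy ha]
  ring

variable (s lam : ℝ) (f : (Fin N → ℝ) → ℝ)

def outDomain (i : Fin N) : Set ((Fin N → ℝ) × ℝ) :=
  {z | z.1 ∈ posOrthant N ∧ z.2 ∈ Set.Ioo 0 (z.1 i)}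

def outIntegrand (i : Fin N) (v : Fin N → ℝ) : (Fin N → ℝ) × ℝ → ℝ :=
  (outDomain i).indicator fun z =>
    gammaWeight s lam z.1 * ((1 - z.2 / z.1 i) ^ (2 * s - 1) / z.2 * (f (z.1 + z.2 • v) - f z.1))

def inIntegrand (w : Fin N → ℝ) : (Fin N → ℝ) × ℝ → ℝ :=
  (posOrthant N ×ˢ Set.Ioi 0).indicator fun z =>
    gammaWeight s lam z.1 * (exp (-(lam * z.2)) / z.2 * (f (z.1 + z.2 • w) - f z.1))

lemma inIntegrand_zero : inIntegrand s lam f 0 = 0 := by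
  ext z
  simp [inIntegrand]

lemma shear_preimage_outDomain (i : Fin N) :
    MeasurableEquiv.shear (Pi.single i 1) ⁻¹' outDomain i = posOrthant N ×ˢ Set.Ioi 0 := by
  ext ⟨y, a⟩
  simp only [MeasurableEquiv.shear, MeasurableEquiv.coe_mk, Equiv.coe_fn_mk, Set.mem_preimage,
    outDomain, Set.mem_ofPred_eq, Set.mem_prod, mem_posOrthant, Set.mem_Ioo, Set.mem_Ioi,
    Pi.add_apply, Pi.smul_apply, smul_eq_mul, Pi.single_apply]
  constructor
  · rintro ⟨hpos, ha, hai⟩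
    refine ⟨fun k => ?_, ha⟩
    by_cases hk : k = i
    · subst hk; simpa using hai
    · simpa [hk] using hpos k
  · rintro ⟨hpos, ha⟩
    refine ⟨fun k => ?_, ha, by simpa using hpos i⟩
    split_ifs <;> nlinarith [hpos k]

lemma outIntegrand_shear (i : Fin N) (v : Fin N → ℝ) (z : (Fin N → ℝ) × ℝ) :
    outIntegrand s lam f i v (MeasurableEquiv.shear (Pi.single i 1) z)
      = inIntegrand s lam f (Pi.single i 1 + v) z - inIntegrand s lam f (Pi.single i 1) z := by
  have hdom := shear_preimage_outDomain (N := N) i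
  rw [outIntegrand, inIntegrand, inIntegrand]
  by_cases h : z ∈ posOrthant N ×ˢ Set.Ioi 0
  · rw [Set.indicator_of_mem (by rwa [← Set.mem_preimage, hdom]), Set.indicator_of_mem h,
      Set.indicator_of_mem h]
    obtain ⟨y, a⟩ := z
    obtain ⟨hy, ha⟩ : y ∈ posOrthant N ∧ 0 < a := h
    have hyi : (y + a • Pi.single i 1 : Fin N → ℝ) i = y i + a := by simp
    have hweight := gammaWeight_add_single_mul s lam (mem_posOrthant.1 hy i) ha.le
    simp only [MeasurableEquiv.shear, MeasurableEquiv.coe_mk, Equiv.coe_fn_mk]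
    rw [hyi, smul_add, ← add_assoc]
    calc _ = gammaWeight s lam (y + a • Pi.single i 1) * (1 - a / (y i + a)) ^ (2 * s - 1)
          * ((f (y + a • Pi.single i 1 + a • v) - f (y + a • Pi.single i 1)) / a) := by ring
      _ = _ := by rw [hweight]; ring
  · rw [Set.indicator_of_notMem (by rwa [← Set.mem_preimage, hdom]), Set.indicator_of_notMem h,
      Set.indicator_of_notMem h, sub_self]

variable {s lam f}

lemma gammaDensity_nonneg (hs : 0 < s) (hlam : 0 ≤ lam) {t : ℝ} (ht : 0 ≤ t) :
    0 ≤ gammaDensity s lam t := by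
  unfold gammaDensity
  positivity

@[fun_prop]
lemma measurable_gammaWeight : Measurable (gammaWeight s lam : (Fin N → ℝ) → ℝ) := by
  unfold gammaWeight
  fun_prop

lemma integrableOn_gammaDensity_mul_exp (hs : 0 < s) {ε : ℝ} (hε : ε < lam) :
    IntegrableOn (fun t => gammaDensity s lam t * exp (ε * t)) (Set.Ioi 0) := by
  refine IntegrableOn.congr_fun ((integrableOn_rpow_mul_exp_neg_mul_rpow
      (by linarith : -1 < 2 * s - 1) one_pos (sub_pos.2 hε)).const_mul
      (lam ^ (2 * s) / Gamma (2 * s))) (fun t _ => ?_) measurableSet_Ioi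
  rw [gammaDensity, rpow_one, mul_assoc _ (exp _), ← exp_add]
  ring_nf

lemma integrableOn_gammaWeight_mul_exp_sum (hs : 0 < s) {ε : ℝ} (hε : ε < lam) :
    IntegrableOn (fun y : Fin N → ℝ => gammaWeight s lam y * exp (ε * ∑ k, y k))
      (posOrthant N) := by
  refine (integrableOn_univ_pi_prod fun _ : Fin N => integrableOn_gammaDensity_mul_exp hs hε
    ).congr_fun (fun y _ => ?_) measurableSet_posOrthant
  dsimp only
  rw [gammaWeight_eq_prod, Finset.mul_sum, exp_sum, ← Finset.prod_mul_distrib]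

lemma gammaWeight_nonneg (hs : 0 < s) (hlam : 0 ≤ lam) {y : Fin N → ℝ} (hy : y ∈ posOrthant N) :
    0 ≤ gammaWeight s lam y :=
  Finset.prod_nonneg fun k _ => gammaDensity_nonneg hs hlam (mem_posOrthant.1 hy k).le

/-- On its domain the integrand is at most `C ρ(y) e^{λ ∑ y / 2} · e^{-λ a / 2}`. -/
lemma integrable_inIntegrand (hs : 0 < s) (hlam : 0 < lam) (hf : Measurable f)
    {w : Fin N → ℝ} (hfw : ExpLipschitzAlong w f) :
    Integrable (inIntegrand s lam f w) (volume.prod volume) := by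
  obtain ⟨C, hC₀, hC⟩ := hfw (lam / 2) (half_pos hlam)
  have hF : Integrable ((posOrthant N).indicator fun y =>
      gammaWeight s lam y * exp (lam / 2 * ∑ k, y k)) :=
    (integrable_indicator_iff measurableSet_posOrthant).2
      (integrableOn_gammaWeight_mul_exp_sum hs (by linarith))
  have hG : Integrable ((Set.Ioi (0 : ℝ)).indicator fun a => exp (-(lam / 2) * a)) :=
    (integrable_indicator_iff measurableSet_Ioi).2 (exp_neg_integrableOn_Ioi 0 (by linarith))
  refine ((hF.mul_prod hG).const_mul C).mono' ?_ (.of_forall fun z => ?_)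
  · exact (Measurable.indicator (by fun_prop)
      (measurableSet_posOrthant.prod measurableSet_Ioi)).aestronglyMeasurable
  obtain ⟨y, a⟩ := z
  by_cases h : (y, a) ∈ posOrthant N ×ˢ Set.Ioi 0
  · rw [inIntegrand, Set.indicator_of_mem h]
    obtain ⟨hy, ha⟩ : y ∈ posOrthant N ∧ 0 < a := h
    rw [Set.indicator_of_mem hy, Set.indicator_of_mem (Set.mem_Ioi.2 ha)]
    have hρ := gammaWeight_nonneg hs hlam.le hy
    have hΔ : |f (y + a • w) - f y| ≤ C * a * exp (lam / 2 * (∑ k, y k + a)) := by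
      refine (hC y a).trans ?_
      rw [abs_of_pos ha]
      gcongr
      exact norm_le_sum_of_mem_posOrthant hy
    have hexp : exp (-(lam * a)) * exp (lam / 2 * (∑ k, y k + a))
        = exp (lam / 2 * ∑ k, y k) * exp (-(lam / 2) * a) := by
      rw [← exp_add, ← exp_add]; ring_nf
    calc ‖gammaWeight s lam y * (exp (-(lam * a)) / a * (f (y + a • w) - f y))‖
        = gammaWeight s lam y * (exp (-(lam * a)) / a) * |f (y + a • w) - f y| := by
          rw [Real.norm_eq_abs, abs_mul, abs_mul, abs_of_nonneg hρ,
            abs_of_nonneg (by positivity : 0 ≤ exp (-(lam * a)) / a), mul_assoc]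
      _ ≤ gammaWeight s lam y * (exp (-(lam * a)) / a)
          * (C * a * exp (lam / 2 * (∑ k, y k + a))) := by gcongr
      _ = C * gammaWeight s lam y * (exp (-(lam * a)) * exp (lam / 2 * (∑ k, y k + a))) := by
          field_simp
      _ = _ := by rw [hexp]; ring
  · rw [inIntegrand, Set.indicator_of_notMem h, norm_zero]
    have hF₀ : 0 ≤ (posOrthant N).indicator
        (fun y => gammaWeight s lam y * exp (lam / 2 * ∑ k, y k)) y :=
      Set.indicator_nonneg (fun y hy => mul_nonneg (gammaWeight_nonneg hs hlam.le hy)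
        (exp_pos _).le) y
    have hG₀ : 0 ≤ (Set.Ioi (0 : ℝ)).indicator (fun a => exp (-(lam / 2) * a)) a :=
      Set.indicator_nonneg (fun _ _ => (exp_pos _).le) a
    exact mul_nonneg hC₀ (mul_nonneg hF₀ hG₀)

lemma integrable_outIntegrand (hs : 0 < s) (hlam : 0 < lam) (hf : Measurable f)
    (hf' : ∀ w, ExpLipschitzAlong w f) (i : Fin N) (v : Fin N → ℝ) :
    Integrable (outIntegrand s lam f i v) (volume.prod volume) := by
  rw [← (measurePreserving_shear volume (Pi.single i 1)).integrable_comp_emb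
    (MeasurableEquiv.measurableEmbedding _)]
  simp only [Function.comp_def, outIntegrand_shear]
  exact (integrable_inIntegrand hs hlam hf (hf' _)).sub (integrable_inIntegrand hs hlam hf (hf' _))

lemma integral_outIntegrand (hs : 0 < s) (hlam : 0 < lam) (hf : Measurable f)
    (hf' : ∀ w, ExpLipschitzAlong w f) (i : Fin N) (v : Fin N → ℝ) :
    ∫ z, outIntegrand s lam f i v z ∂(volume.prod volume)
      = ∫ z, inIntegrand s lam f (Pi.single i 1 + v) z ∂(volume.prod volume)
        - ∫ z, inIntegrand s lam f (Pi.single i 1) z ∂(volume.prod volume) := by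
  rw [← (measurePreserving_shear volume (Pi.single i 1)).integral_comp',
    ← integral_sub (integrable_inIntegrand hs hlam hf (hf' _))
      (integrable_inIntegrand hs hlam hf (hf' _))]
  simp only [outIntegrand_shear]

variable (s lam f)

def outTerm (i : Fin N) (v : Fin N → ℝ) (y : Fin N → ℝ) : ℝ :=
  ∫ a in Set.Ioo 0 (y i), (1 - a / y i) ^ (2 * s - 1) / a * (f (y + a • v) - f y)

def inTerm (w : Fin N → ℝ) (y : Fin N → ℝ) : ℝ :=
  ∫ a in Set.Ioi 0, exp (-(lam * a)) / a * (f (y + a • w) - f y)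

variable {s lam f}

lemma gammaWeight_mul_outTerm (i : Fin N) (v y : Fin N → ℝ) :
    gammaWeight s lam y * outTerm s f i v y = ∫ a in Set.Ioo 0 (y i),
      gammaWeight s lam y * ((1 - a / y i) ^ (2 * s - 1) / a * (f (y + a • v) - f y)) :=
  (integral_const_mul _ _).symm

lemma gammaWeight_mul_inTerm (w y : Fin N → ℝ) :
    gammaWeight s lam y * inTerm lam f w y = ∫ a in Set.Ioi 0,
      gammaWeight s lam y * (exp (-(lam * a)) / a * (f (y + a • w) - f y)) :=
  (integral_const_mul _ _).symm

lemma integrableOn_gammaWeight_mul_outTerm (hs : 0 < s) (hlam : 0 < lam) (hf : Measurable f)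
    (hf' : ∀ w, ExpLipschitzAlong w f) (i : Fin N) (v : Fin N → ℝ) :
    IntegrableOn (fun y => gammaWeight s lam y * outTerm s f i v y) (posOrthant N) := by
  simpa only [gammaWeight_mul_outTerm] using integrableOn_setIntegral_of_integrable_indicator
    (T := fun y : Fin N → ℝ => Set.Ioo 0 (y i)) measurableSet_posOrthant
    (fun _ => measurableSet_Ioo) (integrable_outIntegrand hs hlam hf hf' i v)

lemma setIntegral_gammaWeight_mul_outTerm (hs : 0 < s) (hlam : 0 < lam) (hf : Measurable f)
    (hf' : ∀ w, ExpLipschitzAlong w f) (i : Fin N) (v : Fin N → ℝ) :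
    ∫ y in posOrthant N, gammaWeight s lam y * outTerm s f i v y
      = ∫ z, inIntegrand s lam f (Pi.single i 1 + v) z ∂(volume.prod volume)
        - ∫ z, inIntegrand s lam f (Pi.single i 1) z ∂(volume.prod volume) := by
  simp only [gammaWeight_mul_outTerm]
  rw [setIntegral_setIntegral_eq_integral_indicator (T := fun y : Fin N → ℝ => Set.Ioo 0 (y i))
    measurableSet_posOrthant (fun _ => measurableSet_Ioo)
    (integrable_outIntegrand hs hlam hf hf' i v)]
  exact integral_outIntegrand hs hlam hf hf' i v

lemma integrableOn_gammaWeight_mul_inTerm (hs : 0 < s) (hlam : 0 < lam) (hf : Measurable f)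
    {w : Fin N → ℝ} (hfw : ExpLipschitzAlong w f) :
    IntegrableOn (fun y => gammaWeight s lam y * inTerm lam f w y) (posOrthant N) := by
  simpa only [gammaWeight_mul_inTerm] using integrableOn_setIntegral_of_integrable_indicator
    (T := fun _ : Fin N → ℝ => Set.Ioi (0 : ℝ)) measurableSet_posOrthant
    (fun _ => measurableSet_Ioi) (integrable_inIntegrand hs hlam hf hfw)

lemma setIntegral_gammaWeight_mul_inTerm (hs : 0 < s) (hlam : 0 < lam) (hf : Measurable f)
    {w : Fin N → ℝ} (hfw : ExpLipschitzAlong w f) :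
    ∫ y in posOrthant N, gammaWeight s lam y * inTerm lam f w y
      = ∫ z, inIntegrand s lam f w z ∂(volume.prod volume) := by
  simp only [gammaWeight_mul_inTerm]
  exact setIntegral_setIntegral_eq_integral_indicator (T := fun _ : Fin N → ℝ => Set.Ioi (0 : ℝ))
    measurableSet_posOrthant (fun _ => measurableSet_Ioi) (integrable_inIntegrand hs hlam hf hfw)

lemma reservoir_integrableOn_and_integral_eq_zero (hs : 0 < s) (hlam : 0 < lam) (hf : Measurable f)
    (hf' : ∀ w, ExpLipschitzAlong w f) (i : Fin N) :
    IntegrableOn (fun y => gammaWeight s lam y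
        * (outTerm s f i (-Pi.single i 1) y + inTerm lam f (Pi.single i 1) y)) (posOrthant N)
      ∧ ∫ y in posOrthant N, gammaWeight s lam y
        * (outTerm s f i (-Pi.single i 1) y + inTerm lam f (Pi.single i 1) y) = 0 := by
  have hout := integrableOn_gammaWeight_mul_outTerm hs hlam hf hf' i (-Pi.single i 1)
  have hin := integrableOn_gammaWeight_mul_inTerm hs hlam hf (hf' (Pi.single i 1))
  simp only [mul_add]
  refine ⟨hout.add hin, ?_⟩
  rw [integral_add hout hin, setIntegral_gammaWeight_mul_outTerm hs hlam hf hf',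
    setIntegral_gammaWeight_mul_inTerm hs hlam hf (hf' _), add_neg_cancel, inIntegrand_zero]
  simp

lemma bond_integrableOn_and_integral_eq_zero (hs : 0 < s) (hlam : 0 < lam) (hf : Measurable f)
    (hf' : ∀ w, ExpLipschitzAlong w f) (i j : Fin N) :
    IntegrableOn (fun y => gammaWeight s lam y * (outTerm s f i (Pi.single j 1 - Pi.single i 1) y
        + outTerm s f j (Pi.single i 1 - Pi.single j 1) y)) (posOrthant N)
      ∧ ∫ y in posOrthant N, gammaWeight s lam y
        * (outTerm s f i (Pi.single j 1 - Pi.single i 1) y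
          + outTerm s f j (Pi.single i 1 - Pi.single j 1) y) = 0 := by
  have hij := integrableOn_gammaWeight_mul_outTerm hs hlam hf hf' i (Pi.single j 1 - Pi.single i 1)
  have hji := integrableOn_gammaWeight_mul_outTerm hs hlam hf hf' j (Pi.single i 1 - Pi.single j 1)
  simp only [mul_add]
  refine ⟨hij.add hji, ?_⟩
  rw [integral_add hij hji, setIntegral_gammaWeight_mul_outTerm hs hlam hf hf',
    setIntegral_gammaWeight_mul_outTerm hs hlam hf hf', add_sub_cancel, add_sub_cancel]
  ring

lemma leftGen_eq (hN : 0 < N) (y : Fin N → ℝ) :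
    leftGen s lam f y = outTerm s f ⟨0, hN⟩ (-Pi.single ⟨0, hN⟩ 1) y
      + inTerm lam f (Pi.single ⟨0, hN⟩ 1) y := by
  simp only [leftGen, outTerm, inTerm, get_of_lt hN, upd_of_lt hN,
    Function.update_add_eq_add_smul_single, Function.update_sub_eq_add_smul_neg_single]

lemma rightGen_eq (hN : 0 < N) (y : Fin N → ℝ) :
    rightGen s lam f y = outTerm s f ⟨N - 1, by omega⟩ (-Pi.single ⟨N - 1, by omega⟩ 1) y
      + inTerm lam f (Pi.single ⟨N - 1, by omega⟩ 1) y := by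
  have h : N - 1 < N := by omega
  simp only [rightGen, outTerm, inTerm, get_of_lt h, upd_of_lt h,
    Function.update_add_eq_add_smul_single, Function.update_sub_eq_add_smul_neg_single]

lemma bulkGen_eq {i : ℕ} (hi : i + 1 < N) (y : Fin N → ℝ) :
    bulkGen s i f y
      = outTerm s f ⟨i, by omega⟩ (Pi.single ⟨i + 1, hi⟩ 1 - Pi.single ⟨i, by omega⟩ 1) y
        + outTerm s f ⟨i + 1, hi⟩ (Pi.single ⟨i, by omega⟩ 1 - Pi.single ⟨i + 1, hi⟩ 1) y := by
  have h : i < N := by omega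
  simp only [bulkGen, outTerm, get_of_lt h, get_of_lt hi, move_of_lt h hi (by omega),
    move_of_lt hi h (by omega)]

theorem setIntegral_gammaWeight_mul_gen_eq_zero (hN : 0 < N) (hs : 0 < s) (hlam : 0 < lam)
    (hf : Measurable f) (hf' : ∀ w, ExpLipschitzAlong w f) :
    ∫ y in posOrthant N, gammaWeight s lam y * gen s lam lam f y = 0 := by
  obtain ⟨hLi, hL⟩ := reservoir_integrableOn_and_integral_eq_zero hs hlam hf hf' ⟨0, hN⟩
  obtain ⟨hRi, hR⟩ := reservoir_integrableOn_and_integral_eq_zero hs hlam hf hf' ⟨N - 1, by omega⟩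
  have hB : ∀ i ∈ Finset.range (N - 1),
      IntegrableOn (fun y => gammaWeight s lam y * bulkGen s i f y) (posOrthant N)
        ∧ ∫ y in posOrthant N, gammaWeight s lam y * bulkGen s i f y = 0 := by
    intro i hi
    have hi : i + 1 < N := by have := Finset.mem_range.1 hi; omega
    simpa only [bulkGen_eq hi] using
      bond_integrableOn_and_integral_eq_zero hs hlam hf hf' ⟨i, by omega⟩ ⟨i + 1, hi⟩
  simp only [← leftGen_eq hN, ← rightGen_eq hN] at hLi hL hRi hR
  have hBi : IntegrableOn
      (fun y => ∑ i ∈ Finset.range (N - 1), gammaWeight s lam y * bulkGen s i f y)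
      (posOrthant N) := integrable_finsetSum _ fun i hi => (hB i hi).1
  simp only [gen, mul_add, Finset.mul_sum]
  rw [integral_add ?_ hRi, integral_add hLi hBi, integral_finsetSum _ fun i hi => (hB i hi).1,
    hL, hR, Finset.sum_eq_zero fun i hi => (hB i hi).2, zero_add, zero_add]
  exact hLi.add hBi

/-- At equilibrium (`lamL = lamR = lam`), the product Gamma measure is stationary at the
generator level: the integral of `𝓛 f` against the measure vanishes for every polynomial `f`. -/
theorem stationarity_at_equilibrium (N : ℕ) (hN : 1 ≤ N) (s lam : ℝ)
    (hs : 0 < s) (hlam : 0 < lam) (p : MvPolynomial (Fin N) ℝ) :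
    (∫ y in Set.pi Set.univ (fun _ : Fin N => Set.Ioi (0 : ℝ)),
        gammaWeight s lam y * gen s lam lam (fun z => MvPolynomial.eval z p) y) = 0 :=
  setIntegral_gammaWeight_mul_gen_eq_zero hN hs hlam (MvPolynomial.continuous_eval p).measurable
    (MvPolynomial.expBounded_eval_and_expLipschitzAlong p).2

end HeatModel
end
end

section
/- Let s>0, λ_L>0, λ_R>0 and N≥1. Define the duality function D: (0,∞)^N × ℕ_0^{N+2} → ℝ by D(y,ξ) = (1/λ_L)^{ξ_0} · (Π_{i=1}^N y_i^{ξ_i} Γ(2s)/Γ(2s+ξ_i)) · (1/λ_R)^{ξ_{N+1}}. Let 𝓛 be the generator of the integrable heat conduction model with parameters s, λ_L, λ_R, and let 𝓛^dual be the generator of the absorbing harmonic dual process. Then for all y∈(0,∞)^N and all ξ∈ℕ_0^{N+2}, (𝓛 D(·,ξ))(y) = (𝓛^dual D(y,·))(ξ). -/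
/-!
The duality function factorises over the dual sites: site `i + 1` contributes
`y_i ^ m * Γ(2s) / Γ(2s + m)` and the reservoirs contribute `λ⁻¹ ^ ξ`. Each term of the generator
moves energy between at most two sites, and the matching dual hops move particles between the two
corresponding dual sites, so the claim reduces to identities in one or two variables. Expanding the
jumped polynomials binomially in the jump size `a` turns these into moments of the jump kernels,
`∫₀ˣ (1 - a/x)^(2s-1) a^(k-1) (x-a)^j da = x^(k+j) B(k, 2s+j)` and
`∫₀^∞ e^(-λa) a^(k-1) da = Γ(k) λ^(-k)`. Since `φ_s(k, n) = C(n, k) B(k, 2s+n-k)`, the energy lost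
by a site reproduces the total hopping rate of its dual particles, and energy sent from `x` to `z`
reproduces dual particles hopping from `z` back to `x`.
-/

open MeasureTheory Real

noncomputable section

namespace HeatModel

variable {N : ℕ}

variable {M : ℕ}

/-- Number of dual particles at (0-indexed) site `i`; junk value 0 if out of range. -/
def getN (xi : Fin M → ℕ) (i : ℕ) : ℕ := if h : i < M then xi ⟨i, h⟩ else 0

/-- Update the dual configuration at site `i` to value `v`. -/
def updN (xi : Fin M → ℕ) (i : ℕ) (v : ℕ) : Fin M → ℕ := fun j => if (j : ℕ) = i then v else xi j

/-- Move `k` dual particles from site `i` to site `j`. -/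
def moveN (xi : Fin M → ℕ) (i j k : ℕ) : Fin M → ℕ :=
  updN (updN xi i (getN xi i - k)) j (getN xi j + k)

/-- The jump rates `φ_s(k,n)` of the harmonic dual process. -/
def phi (s : ℝ) (k n : ℕ) : ℝ :=
  if 1 ≤ k ∧ k ≤ n then
    (1 / (k : ℝ)) * (Real.Gamma ((n : ℝ) + 1) * Real.Gamma ((n : ℝ) - (k : ℝ) + 2 * s)) /
      (Real.Gamma ((n : ℝ) - (k : ℝ) + 1) * Real.Gamma ((n : ℝ) + 2 * s))
  else 0

/-- Part of the dual generator moving particles from site `i` to site `j`. -/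
def dualHop (s : ℝ) (i j : ℕ) (f : (Fin M → ℕ) → ℝ) (xi : Fin M → ℕ) : ℝ :=
  ∑ k ∈ Finset.Icc 1 (getN xi i), phi s k (getN xi i) * (f (moveN xi i j k) - f xi)

/-- The generator of the absorbing harmonic dual process on sites `0,…,N+1`
(with `0` and `N+1` absorbing). -/
def dualGen (s : ℝ) (N : ℕ) (f : (Fin (N + 2) → ℕ) → ℝ) (xi : Fin (N + 2) → ℕ) : ℝ :=
  dualHop s 1 0 f xi
    + (∑ i ∈ Finset.range (N - 1),
        (dualHop s (i + 1) (i + 2) f xi + dualHop s (i + 2) (i + 1) f xi))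
    + dualHop s N (N + 1) f xi

/-- The duality function `D(y,ξ)`; the dual site `i+1` sits above the continuous site `i`. -/
def dualityFun (s lamL lamR : ℝ) (N : ℕ) (y : Fin N → ℝ) (xi : Fin (N + 2) → ℕ) : ℝ :=
  (1 / lamL) ^ (getN xi 0) *
    (∏ i : Fin N,
      y i ^ (getN xi (i.1 + 1)) *
        (Real.Gamma (2 * s) / Real.Gamma (2 * s + (getN xi (i.1 + 1) : ℝ)))) *
    (1 / lamR) ^ (getN xi (N + 1))

end HeatModel

open Set ProbabilityTheory

lemma integral_Ioo_rpow_mul_sub_rpow {x α β : ℝ} (hx : 0 < x) (hα : 0 < α) (hβ : 0 < β) :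
    ∫ a in Ioo 0 x, a ^ (α - 1) * (x - a) ^ (β - 1) = x ^ (α + β - 1) * beta α β := by
  have hcomplex : ((∫ a in Ioo 0 x, a ^ (α - 1) * (x - a) ^ (β - 1) : ℝ) : ℂ)
      = ∫ a in (0 : ℝ)..x, (a : ℂ) ^ ((α : ℂ) - 1) * ((x : ℂ) - a) ^ ((β : ℂ) - 1) := by
    rw [intervalIntegral.integral_of_le hx.le, integral_Ioc_eq_integral_Ioo,
      ← integral_complex_ofReal]
    refine setIntegral_congr_fun measurableSet_Ioo fun a ha => ?_
    push_cast
    rw [Complex.ofReal_cpow ha.1.le, Complex.ofReal_cpow (sub_pos.2 ha.2).le]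
    push_cast
    rfl
  rw [Complex.betaIntegral_scaled _ _ hx,
    Complex.betaIntegral_eq_Gamma_mul_div _ _ (by simpa) (by simpa), ← Complex.ofReal_add,
    Complex.Gamma_ofReal, Complex.Gamma_ofReal, Complex.Gamma_ofReal, ← Complex.ofReal_one,
    ← Complex.ofReal_sub, ← Complex.ofReal_cpow hx.le] at hcomplex
  rw [beta]
  exact_mod_cast hcomplex

lemma add_pow_sub_pow_eq_sum_Icc {R : Type*} [CommRing R] (a b : R) (n : ℕ) :
    (a + b) ^ n - b ^ n = ∑ k ∈ Finset.Icc 1 n, n.choose k * a ^ k * b ^ (n - k) := by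
  rw [add_pow, Finset.sum_range_eq_add_Ico _ (Nat.succ_pos n), Nat.succ_eq_add_one,
    Finset.Ico_add_one_right_eq_Icc]
  simp only [pow_zero, one_mul, Nat.sub_zero, Nat.choose_zero_right, Nat.cast_one, mul_one,
    add_sub_cancel_left]
  exact Finset.sum_congr rfl fun k _ => by ring

section Integral

variable {α : Type*} [MeasurableSpace α] {μ : Measure α}

lemma integral_finset_sum_mul {ι : Type*} (t : Finset ι) (c : ι → ℝ) {f : ι → α → ℝ}
    (hf : ∀ i ∈ t, Integrable (f i) μ) :
    ∫ a, ∑ i ∈ t, c i * f i a ∂μ = ∑ i ∈ t, c i * ∫ a, f i a ∂μ := by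
  rw [integral_finsetSum t fun i hi => (hf i hi).const_mul (c i)]
  exact Finset.sum_congr rfl fun i _ => integral_const_mul _ _

lemma integral_mul_const_mul_sub (K F : α → ℝ) (C b : ℝ) :
    ∫ a, K a * (C * F a - C * b) ∂μ = C * ∫ a, K a * (F a - b) ∂μ := by
  rw [← integral_const_mul]
  congr with a
  ring

end Integral

namespace HeatModel

def gammaRatio (s : ℝ) (m : ℕ) : ℝ := Gamma (2 * s) / Gamma (2 * s + m)

def siteFactor (s x : ℝ) (m : ℕ) : ℝ := x ^ m * gammaRatio s m

lemma gammaRatio_zero {s : ℝ} (hs : 0 < s) : gammaRatio s 0 = 1 := by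
  simp [gammaRatio, (Gamma_pos_of_pos (by positivity : 0 < 2 * s)).ne']

lemma beta_mul_gammaRatio {s : ℝ} (hs : 0 < s) (k j : ℕ) :
    beta k (2 * s + j) * gammaRatio s j = Gamma k * gammaRatio s (j + k) := by
  have hj : Gamma (2 * s + j) ≠ 0 := (Gamma_pos_of_pos (by positivity)).ne'
  rw [beta, gammaRatio, gammaRatio,
    show (k : ℝ) + (2 * s + j) = 2 * s + ↑(j + k) by push_cast; ring]
  field_simp

lemma phi_eq_choose_mul_beta {s : ℝ} {k n : ℕ} (hk : 1 ≤ k) (hkn : k ≤ n) :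
    phi s k n = n.choose k * beta k (2 * s + ↑(n - k)) := by
  have hfac : Gamma (n + 1) = n.choose k * (k * Gamma k) * Gamma (↑(n - k) + 1) := by
    obtain ⟨k, rfl⟩ := Nat.exists_eq_add_of_le' hk
    rw [Gamma_nat_eq_factorial, Gamma_nat_eq_factorial, Nat.cast_add_one, Gamma_nat_eq_factorial,
      ← Nat.choose_mul_factorial_mul_factorial hkn, Nat.factorial_succ]
    push_cast
    ring
  have hk0 : (k : ℝ) ≠ 0 := by positivity
  have hnk : Gamma (↑(n - k) + 1) ≠ 0 := by rw [Gamma_nat_eq_factorial]; positivity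
  rw [Nat.cast_sub hkn] at hnk
  rw [phi, if_pos ⟨hk, hkn⟩, beta, hfac, Nat.cast_sub hkn,
    show (n : ℝ) - k + 2 * s = 2 * s + (n - k) by ring,
    show (k : ℝ) + (2 * s + (n - k)) = n + 2 * s by ring]
  field_simp

lemma phi_mul_gammaRatio {s : ℝ} (hs : 0 < s) {k n : ℕ} (hk : 1 ≤ k) (hkn : k ≤ n) :
    phi s k n * gammaRatio s (n - k) = n.choose k * Gamma k * gammaRatio s n := by
  rw [phi_eq_choose_mul_beta hk hkn, mul_assoc, beta_mul_gammaRatio hs, Nat.sub_add_cancel hkn,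
    mul_assoc]

def betaKernel (s x a : ℝ) : ℝ := (1 - a / x) ^ (2 * s - 1) / a

def expKernel (lam a : ℝ) : ℝ := exp (-(lam * a)) / a

lemma betaKernel_mul_pow_mul_pow {s x a : ℝ} (ha : a ∈ Ioo 0 x) (k j : ℕ) :
    betaKernel s x a * (a ^ k * (x - a) ^ j)
      = x ^ (1 - 2 * s) * (a ^ ((k : ℝ) - 1) * (x - a) ^ ((2 * s + j) - 1)) := by
  obtain ⟨ha0, hax⟩ := ha
  have hxa : 0 < x - a := sub_pos.2 hax
  have hx : 0 < x := ha0.trans hax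
  rw [betaKernel, one_sub_div hx.ne', div_rpow hxa.le hx.le, rpow_sub_one ha0.ne', rpow_natCast,
    show 2 * s + j - 1 = 2 * s - 1 + j by ring, rpow_add hxa, rpow_natCast,
    show 1 - 2 * s = -(2 * s - 1) by ring, rpow_neg hx.le]
  field_simp

lemma integral_betaKernel_mul_pow_mul_pow {s x : ℝ} (hs : 0 < s) (hx : 0 < x) {k : ℕ}
    (hk : 1 ≤ k) (j : ℕ) :
    ∫ a in Ioo 0 x, betaKernel s x a * (a ^ k * (x - a) ^ j)
      = x ^ (k + j) * beta k (2 * s + j) := by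
  rw [setIntegral_congr_fun measurableSet_Ioo fun a ha => betaKernel_mul_pow_mul_pow ha k j,
    integral_const_mul, integral_Ioo_rpow_mul_sub_rpow hx (by positivity) (by positivity),
    ← mul_assoc, ← rpow_add hx, ← rpow_natCast]
  push_cast
  ring_nf

lemma integrableOn_betaKernel_mul_pow_mul_pow {s x : ℝ} (hs : 0 < s) (hx : 0 < x) {k : ℕ}
    (hk : 1 ≤ k) (j : ℕ) :
    IntegrableOn (fun a => betaKernel s x a * (a ^ k * (x - a) ^ j)) (Ioo 0 x) :=
  .of_integral_ne_zero <| by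
    rw [integral_betaKernel_mul_pow_mul_pow hs hx hk j]
    exact (mul_pos (pow_pos hx _) (beta_pos (by positivity) (by positivity))).ne'

lemma integral_expKernel_mul_pow {lam : ℝ} (hlam : 0 < lam) {k : ℕ} (hk : 1 ≤ k) :
    ∫ a in Ioi 0, expKernel lam a * a ^ k = Gamma k * (1 / lam) ^ k := by
  rw [← rpow_natCast (1 / lam), mul_comm,
    ← integral_rpow_mul_exp_neg_mul_Ioi (by positivity) hlam]
  refine setIntegral_congr_fun measurableSet_Ioi fun a (ha : 0 < a) => ?_
  rw [expKernel, rpow_sub_one ha.ne', rpow_natCast]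
  ring

lemma integrableOn_expKernel_mul_pow {lam : ℝ} (hlam : 0 < lam) {k : ℕ} (hk : 1 ≤ k) :
    IntegrableOn (fun a => expKernel lam a * a ^ k) (Ioi 0) :=
  .of_integral_ne_zero <| by
    rw [integral_expKernel_mul_pow hlam hk]
    exact (mul_pos (Gamma_pos_of_pos (by positivity)) (by positivity)).ne'

lemma betaKernel_mul_transfer (s x z a : ℝ) (m n : ℕ) :
    betaKernel s x a * (siteFactor s (x - a) m * siteFactor s (z + a) n
        - siteFactor s x m * siteFactor s z n)
      = ∑ k ∈ Finset.Icc 1 n, (n.choose k * z ^ (n - k) * (gammaRatio s m * gammaRatio s n)) *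
          (betaKernel s x a * (a ^ k * (x - a) ^ m))
        - ∑ k ∈ Finset.Icc 1 m, (m.choose k * z ^ n * (gammaRatio s m * gammaRatio s n)) *
          (betaKernel s x a * (a ^ k * (x - a) ^ (m - k))) := by
  have hgain : (z + a) ^ n - z ^ n = ∑ k ∈ Finset.Icc 1 n, n.choose k * a ^ k * z ^ (n - k) := by
    rw [add_comm, add_pow_sub_pow_eq_sum_Icc]
  have hloss : x ^ m - (x - a) ^ m
      = ∑ k ∈ Finset.Icc 1 m, m.choose k * a ^ k * (x - a) ^ (m - k) := by
    simpa using add_pow_sub_pow_eq_sum_Icc a (x - a) m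
  have hsplit : siteFactor s (x - a) m * siteFactor s (z + a) n
        - siteFactor s x m * siteFactor s z n
      = gammaRatio s m * gammaRatio s n *
          ((x - a) ^ m * ((z + a) ^ n - z ^ n) - z ^ n * (x ^ m - (x - a) ^ m)) := by
    simp only [siteFactor]
    ring
  rw [hsplit, hgain, hloss]
  simp only [mul_sub, Finset.mul_sum]
  congr 1 <;> exact Finset.sum_congr rfl fun k _ => by ring

lemma integral_betaKernel_transfer {s x : ℝ} (hs : 0 < s) (hx : 0 < x) (z : ℝ) (m n : ℕ) :
    ∫ a in Ioo 0 x, betaKernel s x a * (siteFactor s (x - a) m * siteFactor s (z + a) n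
        - siteFactor s x m * siteFactor s z n)
      = ∑ k ∈ Finset.Icc 1 n, phi s k n * (siteFactor s x (m + k) * siteFactor s z (n - k))
        - (∑ k ∈ Finset.Icc 1 m, phi s k m) * (siteFactor s x m * siteFactor s z n) := by
  have hgain : ∀ k ∈ Finset.Icc 1 n,
      IntegrableOn (fun a => betaKernel s x a * (a ^ k * (x - a) ^ m)) (Ioo 0 x) :=
    fun k hk => integrableOn_betaKernel_mul_pow_mul_pow hs hx (Finset.mem_Icc.1 hk).1 m
  have hloss : ∀ k ∈ Finset.Icc 1 m,
      IntegrableOn (fun a => betaKernel s x a * (a ^ k * (x - a) ^ (m - k))) (Ioo 0 x) :=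
    fun k hk => integrableOn_betaKernel_mul_pow_mul_pow hs hx (Finset.mem_Icc.1 hk).1 (m - k)
  simp_rw [betaKernel_mul_transfer]
  rw [integral_sub (integrable_finsetSum _ fun k hk => (hgain k hk).const_mul _)
      (integrable_finsetSum _ fun k hk => (hloss k hk).const_mul _),
    integral_finset_sum_mul _ _ hgain, integral_finset_sum_mul _ _ hloss, Finset.sum_mul]
  congr 1 <;> refine Finset.sum_congr rfl fun k hk => ?_ <;>
    obtain ⟨hk1, hkn⟩ := Finset.mem_Icc.1 hk <;> rw [integral_betaKernel_mul_pow_mul_pow hs hx hk1]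
  · have hbeta := beta_mul_gammaRatio hs k m
    have hphi := phi_mul_gammaRatio hs hk1 hkn
    simp only [siteFactor]
    linear_combination (x ^ (m + k) * z ^ (n - k)) *
      (n.choose k * gammaRatio s n * hbeta - gammaRatio s (m + k) * hphi)
  · rw [phi_eq_choose_mul_beta hk1 hkn, Nat.add_sub_cancel' hkn]
    simp only [siteFactor]
    ring

lemma integral_betaKernel_siteFactor_sub {s x : ℝ} (hs : 0 < s) (hx : 0 < x) (m : ℕ) :
    ∫ a in Ioo 0 x, betaKernel s x a * (siteFactor s (x - a) m - siteFactor s x m)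
      = -(∑ k ∈ Finset.Icc 1 m, phi s k m) * siteFactor s x m := by
  simpa [siteFactor, gammaRatio_zero hs] using integral_betaKernel_transfer hs hx 0 m 0

lemma expKernel_mul_siteFactor_sub (s lam x a : ℝ) (m : ℕ) :
    expKernel lam a * (siteFactor s (x + a) m - siteFactor s x m)
      = ∑ k ∈ Finset.Icc 1 m,
          (m.choose k * x ^ (m - k) * gammaRatio s m) * (expKernel lam a * a ^ k) := by
  rw [siteFactor, siteFactor, ← sub_mul, add_comm, add_pow_sub_pow_eq_sum_Icc, Finset.sum_mul,
    Finset.mul_sum]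
  exact Finset.sum_congr rfl fun k _ => by ring

lemma integral_expKernel_siteFactor_sub {s lam : ℝ} (hs : 0 < s) (hlam : 0 < lam) (x : ℝ)
    (m : ℕ) :
    ∫ a in Ioi 0, expKernel lam a * (siteFactor s (x + a) m - siteFactor s x m)
      = ∑ k ∈ Finset.Icc 1 m, phi s k m * ((1 / lam) ^ k * siteFactor s x (m - k)) := by
  simp_rw [expKernel_mul_siteFactor_sub]
  rw [integral_finset_sum_mul _ _ fun k hk =>
    integrableOn_expKernel_mul_pow hlam (Finset.mem_Icc.1 hk).1]
  refine Finset.sum_congr rfl fun k hk => ?_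
  obtain ⟨hk1, hkm⟩ := Finset.mem_Icc.1 hk
  rw [integral_expKernel_mul_pow hlam hk1, siteFactor]
  linear_combination (-(1 / lam) ^ k * x ^ (m - k)) * phi_mul_gammaRatio hs hk1 hkm

variable {N M : ℕ}

lemma get_upd_self (y : Fin N → ℝ) {i : ℕ} (hi : i < N) (v : ℝ) : get (upd y i v) i = v := by
  simp [get, upd, hi]

lemma get_upd_of_ne (y : Fin N → ℝ) {i j : ℕ} (v : ℝ) (h : j ≠ i) :
    get (upd y i v) j = get y j := by
  unfold get upd
  split_ifs <;> simp_all

lemma get_move_src (y : Fin N → ℝ) {i j : ℕ} (hi : i < N) (hij : i ≠ j) (a : ℝ) :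
    get (move y i j a) i = get y i - a := by
  rw [move, get_upd_of_ne _ _ hij, get_upd_self _ hi]

lemma get_move_dst (y : Fin N → ℝ) {i j : ℕ} (hj : j < N) (a : ℝ) :
    get (move y i j a) j = get y j + a := by
  rw [move, get_upd_self _ hj]

lemma get_move_of_ne (y : Fin N → ℝ) {i j l : ℕ} (a : ℝ) (hi : l ≠ i) (hj : l ≠ j) :
    get (move y i j a) l = get y l := by
  rw [move, get_upd_of_ne _ _ hj, get_upd_of_ne _ _ hi]

lemma getN_updN_self (xi : Fin M → ℕ) {i : ℕ} (hi : i < M) (v : ℕ) :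
    getN (updN xi i v) i = v := by
  simp [getN, updN, hi]

lemma getN_updN_of_ne (xi : Fin M → ℕ) {i j : ℕ} (v : ℕ) (h : j ≠ i) :
    getN (updN xi i v) j = getN xi j := by
  unfold getN updN
  split_ifs <;> simp_all

lemma getN_moveN_src (xi : Fin M → ℕ) {i j : ℕ} (hi : i < M) (hij : i ≠ j) (k : ℕ) :
    getN (moveN xi i j k) i = getN xi i - k := by
  rw [moveN, getN_updN_of_ne _ _ hij, getN_updN_self _ hi]

lemma getN_moveN_dst (xi : Fin M → ℕ) {i j : ℕ} (hj : j < M) (k : ℕ) :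
    getN (moveN xi i j k) j = getN xi j + k := by
  rw [moveN, getN_updN_self _ hj]

lemma getN_moveN_of_ne (xi : Fin M → ℕ) {i j l : ℕ} (k : ℕ) (hi : l ≠ i) (hj : l ≠ j) :
    getN (moveN xi i j k) l = getN xi l := by
  rw [moveN, getN_updN_of_ne _ _ hj, getN_updN_of_ne _ _ hi]

lemma dualHop_eq (s : ℝ) (i j : ℕ) (f : (Fin M → ℕ) → ℝ) (xi : Fin M → ℕ) :
    dualHop s i j f xi
      = ∑ k ∈ Finset.Icc 1 (getN xi i), phi s k (getN xi i) * f (moveN xi i j k)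
        - (∑ k ∈ Finset.Icc 1 (getN xi i), phi s k (getN xi i)) * f xi := by
  rw [dualHop, Finset.sum_mul, ← Finset.sum_sub_distrib]
  exact Finset.sum_congr rfl fun k _ => mul_sub _ _ _

def dualFactor (s lamL lamR : ℝ) (y : Fin N → ℝ) (xi : Fin (N + 2) → ℕ) (l : ℕ) : ℝ :=
  if l = 0 then (1 / lamL) ^ getN xi l
  else if l = N + 1 then (1 / lamR) ^ getN xi l
  else siteFactor s (get y (l - 1)) (getN xi l)

section DualFactor

variable {s lamL lamR : ℝ} {y y' : Fin N → ℝ} {xi xi' : Fin (N + 2) → ℕ}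

lemma dualFactor_zero : dualFactor s lamL lamR y xi 0 = (1 / lamL) ^ getN xi 0 := rfl

lemma dualFactor_succ {l : ℕ} (hl : l < N) :
    dualFactor s lamL lamR y xi (l + 1) = siteFactor s (get y l) (getN xi (l + 1)) := by
  simp [dualFactor, hl.ne]

lemma dualFactor_last : dualFactor s lamL lamR y xi (N + 1) = (1 / lamR) ^ getN xi (N + 1) := by
  simp [dualFactor]

lemma dualFactor_upd_of_ne {p l : ℕ} (v : ℝ) (h : l ≠ p + 1) :
    dualFactor s lamL lamR (upd y p v) xi l = dualFactor s lamL lamR y xi l := by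
  unfold dualFactor
  split_ifs
  · rfl
  · rfl
  · rw [get_upd_of_ne _ _ (by omega)]

lemma dualFactor_move_of_ne {i j l : ℕ} (a : ℝ) (hi : l ≠ i + 1) (hj : l ≠ j + 1) :
    dualFactor s lamL lamR (move y i j a) xi l = dualFactor s lamL lamR y xi l := by
  unfold dualFactor
  split_ifs
  · rfl
  · rfl
  · rw [get_move_of_ne _ _ (by omega) (by omega)]

lemma dualFactor_moveN_of_ne {i j l : ℕ} (k : ℕ) (hi : l ≠ i) (hj : l ≠ j) :
    dualFactor s lamL lamR y (moveN xi i j k) l = dualFactor s lamL lamR y xi l := by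
  simp only [dualFactor, getN_moveN_of_ne _ _ hi hj]

lemma dualityFun_eq_prod :
    dualityFun s lamL lamR N y xi = ∏ l ∈ Finset.range (N + 2), dualFactor s lamL lamR y xi l := by
  have hsite : ∀ i : Fin N,
      dualFactor s lamL lamR y xi (i + 1) = siteFactor s (y i) (getN xi (i + 1)) := fun i => by
    rw [dualFactor_succ i.2, get, dif_pos i.2]
  rw [Finset.prod_range_succ, Finset.prod_range_succ', dualFactor_zero, dualFactor_last,
    ← Fin.prod_univ_eq_prod_range]
  simp only [hsite, dualityFun, siteFactor, gammaRatio]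
  ring

lemma dualityFun_eq_of_dualFactor_eq {a b : ℕ} (hab : a ≠ b) (ha : a < N + 2) (hb : b < N + 2)
    (h : ∀ l, l ≠ a → l ≠ b → dualFactor s lamL lamR y' xi' l = dualFactor s lamL lamR y xi l) :
    dualityFun s lamL lamR N y' xi'
      = dualFactor s lamL lamR y' xi' a * dualFactor s lamL lamR y' xi' b *
          ∏ l ∈ ((Finset.range (N + 2)).erase a).erase b, dualFactor s lamL lamR y xi l := by
  rw [dualityFun_eq_prod, ← Finset.mul_prod_erase _ _ (Finset.mem_range.2 ha),
    ← Finset.mul_prod_erase _ _ (Finset.mem_erase.2 ⟨hab.symm, Finset.mem_range.2 hb⟩), mul_assoc]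
  congr 2
  exact Finset.prod_congr rfl fun l hl =>
    h l (Finset.ne_of_mem_erase (Finset.mem_of_mem_erase hl)) (Finset.ne_of_mem_erase hl)

end DualFactor

/- `leftGen s lamL` and `rightGen s lamR` are `reservoirGen` at the sites `0` and `N - 1`, and
`bulkGen s i` is `transferGen s i (i + 1) + transferGen s (i + 1) i`, all definitionally. -/

def reservoirGen (s lam : ℝ) (p : ℕ) (f : (Fin N → ℝ) → ℝ) (y : Fin N → ℝ) : ℝ :=
  (∫ a in Ioo 0 (get y p), betaKernel s (get y p) a * (f (upd y p (get y p - a)) - f y))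
  + ∫ a in Ioi 0, expKernel lam a * (f (upd y p (get y p + a)) - f y)

def transferGen (s : ℝ) (i j : ℕ) (f : (Fin N → ℝ) → ℝ) (y : Fin N → ℝ) : ℝ :=
  ∫ a in Ioo 0 (get y i), betaKernel s (get y i) a * (f (move y i j a) - f y)

section Generators

variable {s lamL lamR : ℝ} {y : Fin N → ℝ}

theorem reservoirGen_dualityFun (hs : 0 < s) {lam : ℝ} (hlam : 0 < lam) {p r : ℕ} (hp : p < N)
    (hr : r < N + 2) (hrp : r ≠ p + 1)
    (hres : ∀ xi', dualFactor s lamL lamR y xi' r = (1 / lam) ^ getN xi' r)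
    (hx : 0 < get y p) (xi : Fin (N + 2) → ℕ) :
    reservoirGen s lam p (fun z => dualityFun s lamL lamR N z xi) y
      = dualHop s (p + 1) r (fun z => dualityFun s lamL lamR N y z) xi := by
  rw [reservoirGen, dualHop_eq]
  set x := get y p
  set m := getN xi (p + 1)
  set R := ∏ l ∈ ((Finset.range (N + 2)).erase (p + 1)).erase r, dualFactor s lamL lamR y xi l
  set c := (1 / lam) ^ getN xi r
  have hcont : ∀ v, dualityFun s lamL lamR N (upd y p v) xi = c * R * siteFactor s v m := by
    intro v
    rw [dualityFun_eq_of_dualFactor_eq hrp.symm (by omega) hr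
        fun l h _ => dualFactor_upd_of_ne v h,
      dualFactor_upd_of_ne v hrp, hres, dualFactor_succ hp, get_upd_self _ hp]
    ring
  have hD : dualityFun s lamL lamR N y xi = c * R * siteFactor s x m := by
    rw [dualityFun_eq_of_dualFactor_eq hrp.symm (by omega) hr fun _ _ _ => rfl, hres,
      dualFactor_succ hp]
    ring
  have hdual : ∀ k, dualityFun s lamL lamR N y (moveN xi (p + 1) r k)
      = (1 / lam) ^ (getN xi r + k) * R * siteFactor s x (m - k) := by
    intro k
    rw [dualityFun_eq_of_dualFactor_eq hrp.symm (by omega) hr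
        fun l h h' => dualFactor_moveN_of_ne k h h',
      hres, dualFactor_succ hp, getN_moveN_dst _ hr, getN_moveN_src _ (by omega) hrp.symm]
    ring
  simp only [hcont, hD, hdual]
  rw [integral_mul_const_mul_sub, integral_mul_const_mul_sub,
    integral_betaKernel_siteFactor_sub hs hx, integral_expKernel_siteFactor_sub hs hlam,
    Finset.mul_sum, Finset.sum_congr rfl fun k _ => (by rw [pow_add]; ring :
      c * R * (phi s k m * ((1 / lam) ^ k * siteFactor s x (m - k)))
        = phi s k m * ((1 / lam) ^ (getN xi r + k) * R * siteFactor s x (m - k)))]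
  ring

theorem transferGen_dualityFun (hs : 0 < s) {i j : ℕ} (hi : i < N) (hj : j < N) (hij : i ≠ j)
    (hx : 0 < get y i) (xi : Fin (N + 2) → ℕ) :
    transferGen s i j (fun z => dualityFun s lamL lamR N z xi) y
      = ∑ k ∈ Finset.Icc 1 (getN xi (j + 1)),
          phi s k (getN xi (j + 1)) * dualityFun s lamL lamR N y (moveN xi (j + 1) (i + 1) k)
        - (∑ k ∈ Finset.Icc 1 (getN xi (i + 1)), phi s k (getN xi (i + 1)))
          * dualityFun s lamL lamR N y xi := by
  rw [transferGen]
  have hij' : i + 1 ≠ j + 1 := by omega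
  set x := get y i
  set z := get y j
  set m := getN xi (i + 1)
  set n := getN xi (j + 1)
  set R := ∏ l ∈ ((Finset.range (N + 2)).erase (i + 1)).erase (j + 1),
    dualFactor s lamL lamR y xi l
  have hcont : ∀ a, dualityFun s lamL lamR N (move y i j a) xi
      = R * (siteFactor s (x - a) m * siteFactor s (z + a) n) := by
    intro a
    rw [dualityFun_eq_of_dualFactor_eq hij' (by omega) (by omega)
        fun l h h' => dualFactor_move_of_ne a h h',
      dualFactor_succ hi, dualFactor_succ hj, get_move_src _ hi hij, get_move_dst _ hj]
    ring
  have hD : dualityFun s lamL lamR N y xi = R * (siteFactor s x m * siteFactor s z n) := by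
    rw [dualityFun_eq_of_dualFactor_eq hij' (by omega) (by omega) fun _ _ _ => rfl,
      dualFactor_succ hi, dualFactor_succ hj]
    ring
  have hdual : ∀ k, dualityFun s lamL lamR N y (moveN xi (j + 1) (i + 1) k)
      = R * (siteFactor s x (m + k) * siteFactor s z (n - k)) := by
    intro k
    rw [dualityFun_eq_of_dualFactor_eq hij' (by omega) (by omega)
        fun l h h' => dualFactor_moveN_of_ne k h' h,
      dualFactor_succ hi, dualFactor_succ hj, getN_moveN_dst _ (by omega),
      getN_moveN_src _ (by omega) hij'.symm]
    ring
  simp only [hcont, hD, hdual]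
  rw [integral_mul_const_mul_sub, integral_betaKernel_transfer hs hx, mul_sub, Finset.mul_sum,
    Finset.sum_congr rfl fun k _ => mul_left_comm R (phi s k n) _]
  ring

theorem bulkGen_dualityFun (hs : 0 < s) {i : ℕ} (hi : i + 1 < N) (hx : 0 < get y i)
    (hz : 0 < get y (i + 1)) (xi : Fin (N + 2) → ℕ) :
    bulkGen s i (fun z => dualityFun s lamL lamR N z xi) y
      = dualHop s (i + 1) (i + 2) (fun z => dualityFun s lamL lamR N y z) xi
        + dualHop s (i + 2) (i + 1) (fun z => dualityFun s lamL lamR N y z) xi := by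
  rw [show bulkGen s i (fun z => dualityFun s lamL lamR N z xi) y
      = transferGen s i (i + 1) (fun z => dualityFun s lamL lamR N z xi) y
        + transferGen s (i + 1) i (fun z => dualityFun s lamL lamR N z xi) y from rfl,
    transferGen_dualityFun hs (by omega) hi (by omega) hx,
    transferGen_dualityFun hs hi (by omega) (by omega) hz, dualHop_eq, dualHop_eq]
  ring

end Generators

/-- Duality between the integrable heat conduction model and the absorbing harmonic process. -/
theorem duality (N : ℕ) (hN : 1 ≤ N) (s lamL lamR : ℝ)
    (hs : 0 < s) (hL : 0 < lamL) (hR : 0 < lamR)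
    (y : Fin N → ℝ) (hy : ∀ i, 0 < y i) (xi : Fin (N + 2) → ℕ) :
    gen s lamL lamR (fun z => dualityFun s lamL lamR N z xi) y
      = dualGen s N (fun z => dualityFun s lamL lamR N y z) xi := by
  have hpos : ∀ i < N, 0 < get y i := fun i hi => by rw [get, dif_pos hi]; exact hy _
  have hleft := reservoirGen_dualityFun (lamR := lamR) (p := 0) (r := 0) hs hL hN (by omega)
    (by omega) (fun _ => dualFactor_zero) (hpos 0 hN) xi
  have hright := reservoirGen_dualityFun (lamL := lamL) (p := N - 1) (r := N + 1) hs hR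
    (by omega) (by omega) (by omega) (fun _ => dualFactor_last) (hpos _ (by omega)) xi
  rw [Nat.sub_add_cancel hN] at hright
  have hbulk : ∀ i ∈ Finset.range (N - 1),
      bulkGen s i (fun z => dualityFun s lamL lamR N z xi) y
        = dualHop s (i + 1) (i + 2) (fun z => dualityFun s lamL lamR N y z) xi
          + dualHop s (i + 2) (i + 1) (fun z => dualityFun s lamL lamR N y z) xi := by
    intro i hi
    rw [Finset.mem_range] at hi
    exact bulkGen_dualityFun hs (by omega) (hpos i (by omega)) (hpos (i + 1) (by omega)) xi
  exact congrArg₂ (· + ·) (congrArg₂ (· + ·) hleft (Finset.sum_congr rfl hbulk)) hright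

end HeatModel
end
end

section
/- Let s>0 and n∈ℕ, n≥1. Then Σ_{k=1}^n (1/k)·Γ(n+1)Γ(n-k+2s)/(Γ(n-k+1)Γ(n+2s)) = ψ(n+2s) − ψ(2s), where ψ = Γ'/Γ is the digamma function. -/
noncomputable section

namespace HeatModel

/-- The digamma function `ψ = Γ'/Γ`. -/
def digamma (x : ℝ) : ℝ := deriv Real.Gamma x / Real.Gamma x

/-!
By `ψ(x + 1) = ψ(x) + 1/x`, the right-hand side is `∑_{m<n} 1/(m + c)` with `c = 2s`. The
left-hand side obeys the same recursion in `n`: passing from `n` to `n + 1`, the increment of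
each rate `φ(k, n)` is `Γ(n + 1)/Γ(n + c + 1)` times `(c - 1) Γ(n - k + c)/Γ(n - k + 2)`, a
telescoping summand, and the increments together with the new rate
`φ(n + 1, n + 1) = B(n + 1, c)` add up to exactly `1/(n + c)`.
-/

open Finset Real

theorem digamma_add_one {x : ℝ} (hx : ∀ m : ℕ, x ≠ -m) :
    digamma (x + 1) = digamma x + x⁻¹ := by
  have hx0 : x ≠ 0 := by simpa using hx 0
  have hΓ : Gamma x ≠ 0 := Gamma_ne_zero hx
  have hΓ_add_one : (fun y => Gamma (y + 1)) =ᶠ[nhds x] fun y => y * Gamma y := by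
    filter_upwards [eventually_ne_nhds hx0] with y hy using Gamma_add_one hy
  have hderiv : deriv Gamma (x + 1) = Gamma x + x * deriv Gamma x := by
    rw [← deriv_comp_add_const, hΓ_add_one.deriv_eq,
      deriv_fun_mul differentiableAt_fun_id (differentiableAt_Gamma hx)]
    simp
  rw [digamma, digamma, hderiv, Gamma_add_one hx0]
  field_simp
  ring

theorem digamma_add_nat_sub {c : ℝ} (hc : ∀ m : ℕ, c ≠ -m) (n : ℕ) :
    digamma (n + c) - digamma c = ∑ m ∈ range n, (m + c)⁻¹ := by
  induction n with
  | zero => simp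
  | succ n ih =>
    have hnc : ∀ m : ℕ, (n : ℝ) + c ≠ -m := fun m h => hc (n + m) (by push_cast; linarith)
    rw [sum_range_succ, ← ih, Nat.cast_succ, add_right_comm, digamma_add_one hnc]
    ring

theorem Gamma_add_one_div_sub {x c : ℝ} (hxc : x + c ≠ 0) (hx : x + 1 ≠ 0) :
    Gamma (x + c + 1) / Gamma (x + 2) - Gamma (x + c) / Gamma (x + 1) =
      (c - 1) * Gamma (x + c) / Gamma (x + 2) := by
  rw [Gamma_add_one hxc, show x + 2 = x + 1 + 1 by ring, Gamma_add_one hx]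
  by_cases hΓ : Gamma (x + 1) = 0
  · simp [hΓ]
  field_simp
  ring

theorem sum_range_Gamma_div {c : ℝ} (hc : 0 < c) (n : ℕ) :
    ∑ m ∈ range n, (c - 1) * Gamma (m + c) / Gamma (m + 2) =
      Gamma (n + c) / Gamma (n + 1) - Gamma c := by
  have hterm : ∀ m : ℕ, Gamma ((m + 1 : ℕ) + c) / Gamma ((m + 1 : ℕ) + 1) -
      Gamma (m + c) / Gamma (m + 1) = (c - 1) * Gamma (m + c) / Gamma (m + 2) := fun m => by
    push_cast
    rw [add_right_comm, add_assoc (m : ℝ) 1 1, one_add_one_eq_two]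
    exact Gamma_add_one_div_sub (by positivity) (by positivity)
  simp_rw [← hterm]
  exact (sum_range_sub (fun m : ℕ => Gamma (m + c) / Gamma (m + 1)) n).trans (by simp)

theorem sum_Icc_apply_sub_eq_sum_range {M : Type*} [AddCommMonoid M] (f : ℝ → M) (n : ℕ) :
    ∑ k ∈ Icc 1 n, f (n - k) = ∑ m ∈ range n, f m := by
  refine sum_nbij' (fun k => n - k) (fun m => n - m) ?_ ?_ ?_ ?_ ?_ <;> intro k hk <;>
    simp only [mem_Icc, mem_range] at hk ⊢
  · omega
  · omega
  · omega
  · omega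
  · rw [Nat.cast_sub hk.2]

/-- The rate `φ_s(k, n)` is `jumpRate (2 * s) k n`. -/
def jumpRate (c k x : ℝ) : ℝ :=
  1 / k * (Gamma (x + 1) * Gamma (x - k + c)) / (Gamma (x - k + 1) * Gamma (x + c))

theorem jumpRate_self (c : ℝ) {x : ℝ} (hx : x ≠ 0) :
    jumpRate c x x = Gamma x * Gamma c / Gamma (x + c) := by
  simp only [jumpRate, sub_self, zero_add, Gamma_one, Gamma_add_one hx]
  field_simp

theorem jumpRate_add_one_sub {c k x : ℝ} (hc : 0 < c) (hk : 0 < k) (hkx : k ≤ x) :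
    jumpRate c k (x + 1) - jumpRate c k x =
      Gamma (x + 1) / Gamma (x + c + 1) * ((c - 1) * Gamma (x - k + c) / Gamma (x - k + 2)) := by
  have hx : x + 1 ≠ 0 := by linarith
  have hxc : x + c ≠ 0 := by linarith
  have hxkc : x - k + c ≠ 0 := by linarith
  have hxk : x - k + 1 ≠ 0 := by linarith
  simp only [jumpRate]
  rw [show x + 1 - k + c = x - k + c + 1 by ring, show x + 1 - k + 1 = x - k + 1 + 1 by ring,
    show x - k + 2 = x - k + 1 + 1 by ring, add_right_comm x 1 c,
    Gamma_add_one hx, Gamma_add_one hxkc, Gamma_add_one hxk, Gamma_add_one hxc]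
  field_simp
  ring

theorem sum_Icc_jumpRate {c : ℝ} (hc : 0 < c) (n : ℕ) :
    ∑ k ∈ Icc 1 n, jumpRate c k n = ∑ m ∈ range n, (m + c)⁻¹ := by
  induction n with
  | zero => simp
  | succ n ih =>
    have hnc : (n : ℝ) + c ≠ 0 := by positivity
    have hstep : ∀ k ∈ Icc 1 n, jumpRate c k (n + 1) = jumpRate c k n +
        Gamma (n + 1) / Gamma (n + c + 1) * ((c - 1) * Gamma (n - k + c) / Gamma (n - k + 2)) := by
      intro k hk
      rw [mem_Icc] at hk
      rw [← jumpRate_add_one_sub hc (by exact_mod_cast hk.1) (by exact_mod_cast hk.2)]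
      ring
    calc ∑ k ∈ Icc 1 (n + 1), jumpRate c k (n + 1 : ℕ)
        = ∑ k ∈ Icc 1 n, jumpRate c k (n + 1) + jumpRate c (n + 1) (n + 1) := by
          rw [sum_Icc_succ_top (by omega)]; push_cast; rfl
      _ = ∑ m ∈ range n, (m + c)⁻¹
            + Gamma (n + 1) / Gamma (n + c + 1) * (Gamma (n + c) / Gamma (n + 1) - Gamma c)
            + Gamma (n + 1) * Gamma c / Gamma (n + 1 + c) := by
          rw [sum_congr rfl hstep, sum_add_distrib, ih, ← mul_sum,
            sum_Icc_apply_sub_eq_sum_range (fun y => (c - 1) * Gamma (y + c) / Gamma (y + 2)),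
            sum_range_Gamma_div hc, jumpRate_self c (by positivity)]
      _ = ∑ m ∈ range (n + 1), (m + c)⁻¹ := by
          rw [sum_range_succ, add_right_comm (n : ℝ) 1 c, Gamma_add_one hnc]
          field_simp
          ring

theorem sum_phi_eq_digamma_general (s : ℝ) (hs : 0 < s) (n : ℕ) :
    (∑ k ∈ Finset.Icc 1 n,
        (1 / (k : ℝ)) * (Real.Gamma ((n : ℝ) + 1) * Real.Gamma ((n : ℝ) - (k : ℝ) + 2 * s)) /
          (Real.Gamma ((n : ℝ) - (k : ℝ) + 1) * Real.Gamma ((n : ℝ) + 2 * s)))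
    = digamma ((n : ℝ) + 2 * s) - digamma (2 * s) := by
  have hc : 0 < 2 * s := by positivity
  rw [digamma_add_nat_sub (fun m => ((neg_nonpos.2 m.cast_nonneg).trans_lt hc).ne') n,
    ← sum_Icc_jumpRate hc]
  rfl

/-- The total jump rate of the harmonic dual process equals a digamma difference:
`Σ_{k=1}^n φ_s(k,n) = ψ(n+2s) − ψ(2s)`. -/
theorem sum_phi_eq_digamma (s : ℝ) (hs : 0 < s) (n : ℕ) (hn : 1 ≤ n) :
    (∑ k ∈ Finset.Icc 1 n,
        (1 / (k : ℝ)) * (Real.Gamma ((n : ℝ) + 1) * Real.Gamma ((n : ℝ) - (k : ℝ) + 2 * s)) /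
          (Real.Gamma ((n : ℝ) - (k : ℝ) + 1) * Real.Gamma ((n : ℝ) + 2 * s)))
    = digamma ((n : ℝ) + 2 * s) - digamma (2 * s) :=
  sum_phi_eq_digamma_general s hs n

end HeatModel
end
end

section
/- Let s>0, x≥0 a real number, and m∈ℕ with m≥1. Then Σ_{k=0}^m (−1)^k/(k!(m−k)!) · (ψ(x+k+2s) − ψ(2s)) = −(1/m) · Γ(x+2s)/Γ(x+2s+m), where ψ = Γ'/Γ is the digamma function. -/
noncomputable section

namespace HeatModel

/-! With `y = x + 2s`, the sum is `(-1)^m / m!` times the `m`-th forward difference at `y` of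
`ψ - ψ(2s)`, in which the constant drops out. The recurrence `Γ(t+1) = tΓ(t)` gives both
`Δψ(t) = 1/t = Γ(t)/Γ(t+1)` and `Δ[Γ(t)/Γ(t+a)] = -a Γ(t)/Γ(t+a+1)`, hence by induction
`Δ^(n+1) ψ(y) = (-1)^n n! Γ(y)/Γ(y+n+1)`. -/

open Real (Gamma)
open Finset Nat

lemma deriv_Gamma_add_one {s : ℝ} (hs : ∀ m : ℕ, s ≠ -m) :
    deriv Gamma (s + 1) = Gamma s + s * deriv Gamma s := by
  have hs0 : s ≠ 0 := by simpa using hs 0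
  have hloc : (fun t ↦ Gamma (t + 1)) =ᶠ[nhds s] fun t ↦ t * Gamma t :=
    (eventually_ne_nhds hs0).mono fun t ht ↦ Real.Gamma_add_one ht
  rw [← deriv_comp_add_const, hloc.deriv_eq,
    deriv_fun_mul differentiableAt_fun_id (Real.differentiableAt_Gamma hs), deriv_id'', one_mul]

lemma digamma_add_one_s16 {s : ℝ} (hs : ∀ m : ℕ, s ≠ -m) :
    digamma (s + 1) = digamma s + s⁻¹ := by
  have hs0 : s ≠ 0 := by simpa using hs 0
  rw [digamma, digamma, deriv_Gamma_add_one hs, Real.Gamma_add_one hs0, add_div,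
    div_mul_cancel_right₀ (Real.Gamma_ne_zero hs), mul_div_mul_left _ _ hs0, add_comm]

lemma fwdDiff_Gamma_div_Gamma_add {s : ℝ} (a : ℝ) (hs : s ≠ 0) (hsa : s + a ≠ 0) :
    fwdDiff 1 (fun t ↦ Gamma t / Gamma (t + a)) s = -a * (Gamma s / Gamma (s + (a + 1))) := by
  rw [fwdDiff, ← add_assoc, add_right_comm s 1, Real.Gamma_add_one hs, Real.Gamma_add_one hsa]
  rcases eq_or_ne (Gamma (s + a)) 0 with h | h
  · simp [h]
  · field_simp
    ring

lemma fwdDiff_iter_succ_digamma (n : ℕ) {s : ℝ} (hs : ∀ m : ℕ, s ≠ -m) :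
    (fwdDiff 1)^[n + 1] digamma s = (-1) ^ n * n ! * (Gamma s / Gamma (s + (n + 1))) := by
  induction n generalizing s with
  | zero =>
    have hs0 : s ≠ 0 := by simpa using hs 0
    have hΓ := Real.Gamma_ne_zero hs
    simp only [zero_add, Function.iterate_one, fwdDiff, digamma_add_one_s16 hs, add_sub_cancel_left,
      pow_zero, factorial_zero, cast_one, mul_one, CharP.cast_eq_zero, Real.Gamma_add_one hs0,
      one_mul]
    field_simp
  | succ n ih =>
    have hs1 : ∀ m : ℕ, s + 1 ≠ -m := fun m h ↦ hs (m + 1) (by push_cast; linarith)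
    have hs0 : s ≠ 0 := by simpa using hs 0
    have hsn : s + (n + 1) ≠ 0 := fun h ↦ hs (n + 1) (by push_cast; linarith)
    have hstep := fwdDiff_Gamma_div_Gamma_add ((n : ℝ) + 1) hs0 hsn
    rw [fwdDiff] at hstep
    rw [Function.iterate_succ_apply', fwdDiff, ih hs1, ih hs, ← mul_sub, hstep]
    push_cast [Nat.factorial_succ]
    ring

lemma sum_div_factorial_mul_shift_eq_fwdDiff_iter {K : Type*} [Field K] [CharZero K] (f : K → K)
    (m : ℕ) (y : K) :
    ∑ k ∈ range (m + 1), (-1) ^ k / (k ! * (m - k)! : K) * f (y + k) =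
      (-1) ^ m / m ! * (fwdDiff 1)^[m] f y := by
  rw [fwdDiff_iter_eq_sum_shift, mul_sum]
  refine sum_congr rfl fun k hk ↦ ?_
  have hkm : k ≤ m := Nat.lt_succ_iff.mp (mem_range.mp hk)
  rw [zsmul_eq_mul, nsmul_one]
  push_cast
  rw [Nat.cast_choose K hkm]
  have hsign : (-1 : K) ^ m * (-1) ^ (m - k) = (-1) ^ k := by
    rw [← Nat.add_sub_cancel' hkm, pow_add, Nat.add_sub_cancel_left, mul_assoc, ← pow_add,
      ← two_mul, pow_mul]
    norm_num
  have hm : (m ! : K) ≠ 0 := Nat.cast_ne_zero.mpr m.factorial_ne_zero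
  rw [← hsign]
  field_simp

lemma fwdDiff_iter_succ_sub_const {M G : Type*} [AddCommMonoid M] [AddCommGroup G] (h : M)
    (f : M → G) (c : G) (n : ℕ) :
    (fwdDiff h)^[n + 1] (fun t ↦ f t - c) = (fwdDiff h)^[n + 1] f := by
  rw [Function.iterate_succ_apply, Function.iterate_succ_apply]
  congr 1
  exact funext fun t ↦ sub_sub_sub_cancel_right _ _ _

/-- The finite-difference identity for the digamma function (eq. (3.22) of
Frassek–Giardinà, eq. (4.25) of the paper):
`Σ_{k=0}^m (−1)^k/(k!(m−k)!) (ψ(x+k+2s) − ψ(2s)) = −(1/m) Γ(x+2s)/Γ(x+2s+m)`. -/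
theorem digamma_finite_difference (s : ℝ) (hs : 0 < s) (x : ℝ) (hx : 0 ≤ x)
    (m : ℕ) (hm : 1 ≤ m) :
    (∑ k ∈ Finset.range (m + 1),
        (-1 : ℝ) ^ k / ((Nat.factorial k : ℝ) * (Nat.factorial (m - k) : ℝ)) *
          (digamma (x + (k : ℝ) + 2 * s) - digamma (2 * s)))
    = -(1 / (m : ℝ)) * Real.Gamma (x + 2 * s) / Real.Gamma (x + 2 * s + (m : ℝ)) := by
  obtain ⟨n, rfl⟩ := Nat.exists_eq_add_of_le' hm
  set y := x + 2 * s
  have hy0 : 0 < y := by positivity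
  have hy : ∀ k : ℕ, y ≠ -k := fun k ↦ (hy0.trans_le' (neg_nonpos.2 k.cast_nonneg)).ne'
  have hshift : ∀ k : ℕ, x + k + 2 * s = y + k := fun k ↦ by ring
  simp only [hshift]
  rw [sum_div_factorial_mul_shift_eq_fwdDiff_iter (fun t ↦ digamma t - digamma (2 * s)),
    fwdDiff_iter_succ_sub_const, fwdDiff_iter_succ_digamma n hy]
  have hsign : (-1 : ℝ) ^ (n + 1) * (-1) ^ n = -1 := by
    rw [pow_succ, mul_right_comm, ← mul_pow]
    norm_num
  push_cast [Nat.factorial_succ]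
  field_simp
  exact hsign

end HeatModel
end
end
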